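/- The digit-swapping function f on (0,1) (swapping binary digits in positions 2n and 2n+1) is not contained in any countable union of monotone functions each of whose domains intersected with dom(f) is Lebesgue measurable. -/

import Mathlib

open MeasureTheory

/-- The real number with binary digit sequence `a` (digit `i` in position `i+1`). -/
noncomputable def bval (a : ℕ → Bool) : ℝ :=
  ∑' i : ℕ, (if a i then ((2 : ℝ) ^ (i + 1))⁻¹ else 0)

/-- Swap adjacent binary digits: positions `2n` and `2n+1` are exchanged. -/
def bswap (a : ℕ → Bool) : ℕ → Bool :=
  fun n => if n % 2 = 0 then a (n + 1) else a (n - 1)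

/-- The graph of the digit-swapping function `f`, defined on reals in `(0,1)`
with a unique binary expansion. -/
def swapGraph : Set (ℝ × ℝ) :=
  {p | ∃ a : ℕ → Bool, bval a = p.1 ∧ (∀ b : ℕ → Bool, bval b = p.1 → b = a) ∧
    p.1 ∈ Set.Ioo (0 : ℝ) 1 ∧ p.2 = bval (bswap a)}

/-!
Off the countable set of dyadic rationals every `x ∈ (0,1)` has a unique binary expansion, so
the graph of `f` lies over almost all of `(0,1)` and one of the sets
`Aₙ = {x ∈ Sₙ | (x, gₙ x) ∈ graph f}` has positive (outer) measure. Around a density point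
of `Aₙ`, the set `Aₙ` meets, outside the dyadics, each of the four quarters of a dyadic interval
of length `4⁻ᴺ`. On these quarters the digits `2N, 2N+1` are `00, 01, 10, 11`; after the swap
the images are ordered as `00 < 10 < 01 < 11`. Quarters `01` and `10` then contradict
monotonicity of `gₙ` on `Aₙ`, and quarters `00` and `11` contradict antitonicity.
-/

namespace Real

open Finset

variable {b : ℕ} [NeZero b]

theorem exists_nat_eq_pow_mul_sum_ofDigitsTerm (d : ℕ → Fin b) (n : ℕ) :
    ∃ N : ℕ, (b : ℝ) ^ n * ∑ i ∈ range n, ofDigitsTerm d i = N := by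
  have hb : (b : ℝ) ≠ 0 := NeZero.ne _
  induction n with
  | zero => exact ⟨0, by simp⟩
  | succ n ih =>
    obtain ⟨N, hN⟩ := ih
    refine ⟨b * N + d n, ?_⟩
    rw [sum_range_succ, mul_add, pow_succ', mul_assoc, hN, ofDigitsTerm]
    push_cast
    field_simp
    ring

theorem pow_mul_sum_ofDigitsTerm_eq_floor (d : ℕ → Fin b) {n : ℕ}
    (hd : ∀ k : ℕ, (b : ℝ) ^ n * ofDigits d ≠ k) :
    (b : ℝ) ^ n * ∑ i ∈ range n, ofDigitsTerm d i = ⌊(b : ℝ) ^ n * ofDigits d⌋₊ := by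
  have hb : (b : ℝ) ≠ 0 := NeZero.ne _
  obtain ⟨N, hN⟩ := exists_nat_eq_pow_mul_sum_ofDigitsTerm d n
  have hsplit : (b : ℝ) ^ n * ofDigits d = N + ofDigits (fun i ↦ d (i + n)) := by
    rw [ofDigits_eq_sum_add_ofDigits d n, mul_add, hN, ← mul_assoc,
      mul_inv_cancel₀ (pow_ne_zero n hb), one_mul]
  have hT0 := ofDigits_nonneg (fun i ↦ d (i + n))
  have hT1 : ofDigits (fun i ↦ d (i + n)) ≠ 1 := fun h ↦
    hd (N + 1) (by rw [hsplit, h]; push_cast; ring)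
  rw [hN, Nat.cast_inj, eq_comm, Nat.floor_eq_iff (by rw [hsplit]; positivity), hsplit]
  constructor
  · linarith
  · linarith [lt_of_le_of_ne (ofDigits_le_one (fun i ↦ d (i + n))) hT1]

theorem ofDigits_pos {d : ℕ → Fin b} (hd : ∃ j, d j ≠ 0) : 0 < ofDigits d := by
  obtain ⟨j, hj⟩ := hd
  have hb : (0 : ℝ) < b := by exact_mod_cast NeZero.pos b
  refine summable_ofDigitsTerm.tsum_pos (fun _ ↦ ofDigitsTerm_nonneg) j ?_
  have hdj : (0 : ℝ) < (d j : ℕ) := by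
    exact_mod_cast Nat.pos_of_ne_zero (Fin.val_ne_zero_iff.mpr hj)
  exact mul_pos hdj (by positivity)

theorem eq_of_ofDigits_eq {d d' : ℕ → Fin b} (h : ofDigits d = ofDigits d')
    (hd : ∀ (n k : ℕ), (b : ℝ) ^ n * ofDigits d ≠ k) : d = d' := by
  have hb : (b : ℝ) ≠ 0 := NeZero.ne _
  have hsum (n : ℕ) :
      ∑ i ∈ range n, ofDigitsTerm d i = ∑ i ∈ range n, ofDigitsTerm d' i := by
    have h₁ := pow_mul_sum_ofDigitsTerm_eq_floor d (hd n)
    have h₂ := pow_mul_sum_ofDigitsTerm_eq_floor d' (h ▸ hd n)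
    rw [h, ← h₂] at h₁
    exact mul_left_cancel₀ (pow_ne_zero n hb) h₁
  funext i
  have hterm : ofDigitsTerm d i = ofDigitsTerm d' i := by
    have := hsum (i + 1)
    rwa [sum_range_succ, sum_range_succ, hsum i, add_right_inj] at this
  simp only [ofDigitsTerm, mul_eq_mul_right_iff, inv_eq_zero, pow_eq_zero_iff', hb, ne_eq,
    false_and, or_false, Nat.cast_inj] at hterm
  exact Fin.ext hterm

theorem exists_le_ne_zero_of_pow_mul_ofDigits_ne {d : ℕ → Fin b} {n : ℕ}
    (hd : ∀ k : ℕ, (b : ℝ) ^ n * ofDigits d ≠ k) : ∃ j, n ≤ j ∧ d j ≠ 0 := by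
  by_contra! hzero
  obtain ⟨N, hN⟩ := exists_nat_eq_pow_mul_sum_ofDigitsTerm d n
  have htail : ofDigits (fun i ↦ d (i + n)) = 0 := by
    simp [ofDigits, ofDigitsTerm, hzero _ (Nat.le_add_left n _)]
  apply hd N
  rw [ofDigits_eq_sum_add_ofDigits d n, htail, mul_zero, add_zero, hN]

theorem ofDigits_lt_ofDigits {d d' : ℕ → Fin b} {i : ℕ} (heq : ∀ j < i, d j = d' j)
    (hlt : d i < d' i) (hpos : ∃ j, i < j ∧ d' j ≠ 0) : ofDigits d < ofDigits d' := by
  have hprefix : ∑ j ∈ range i, ofDigitsTerm d j = ∑ j ∈ range i, ofDigitsTerm d' j :=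
    sum_congr rfl fun j hj ↦ by rw [ofDigitsTerm, ofDigitsTerm, heq j (mem_range.mp hj)]
  have htail : 0 < ofDigits (fun j ↦ d' (j + (i + 1))) := by
    obtain ⟨j, hij, hj⟩ := hpos
    exact ofDigits_pos ⟨j - (i + 1), by rwa [Nat.sub_add_cancel hij]⟩
  have hdigit : ((d i : ℕ) : ℝ) + 1 ≤ (d' i : ℕ) := by exact_mod_cast hlt
  have hu : (0 : ℝ) < ((b : ℝ) ^ (i + 1))⁻¹ := by
    have : (0 : ℝ) < b := by exact_mod_cast NeZero.pos b
    positivity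
  rw [ofDigits_eq_sum_add_ofDigits d (i + 1), ofDigits_eq_sum_add_ofDigits d' (i + 1),
    sum_range_succ, sum_range_succ, hprefix, ofDigitsTerm, ofDigitsTerm]
  nlinarith [ofDigits_le_one (fun j ↦ d (j + (i + 1))), mul_pos hu htail]

end Real

open Set Filter Topology Metric
open scoped ENNReal

def finDigits (a : ℕ → Bool) : ℕ → Fin 2 := fun i ↦ if a i then 1 else 0

theorem bval_eq_ofDigits (a : ℕ → Bool) : bval a = Real.ofDigits (finDigits a) := by
  unfold bval Real.ofDigits Real.ofDigitsTerm finDigits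
  congr 1
  funext i
  cases a i <;> simp

@[simp]
theorem finDigits_eq_zero_iff {a : ℕ → Bool} {i : ℕ} : finDigits a i = 0 ↔ a i = false := by
  cases h : a i <;> simp [finDigits, h]

theorem finDigits_injective : Function.Injective finDigits := fun a a' h ↦ by
  funext i
  have := congrFun h i
  cases ha : a i <;> cases ha' : a' i <;> simp_all [finDigits]

def dyadics : Set ℝ := ⋃ n : ℕ, range fun k : ℤ ↦ (k : ℝ) / 2 ^ n

theorem countable_dyadics : dyadics.Countable :=
  countable_iUnion fun _ ↦ countable_range _

theorem pow_mul_ne_natCast_of_notMem_dyadics {x : ℝ} (hx : x ∉ dyadics) (n k : ℕ) :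
    ((2 : ℕ) : ℝ) ^ n * x ≠ k := fun h ↦
  hx <| mem_iUnion.2 ⟨n, k, by
    simp only [Int.cast_natCast]
    rw [div_eq_iff (by positivity), mul_comm, ← h]
    push_cast
    rfl⟩

theorem eq_of_bval_eq {a a' : ℕ → Bool} (h : bval a = bval a') (ha : bval a ∉ dyadics) :
    a = a' := by
  rw [bval_eq_ofDigits, bval_eq_ofDigits] at h
  rw [bval_eq_ofDigits] at ha
  exact finDigits_injective (Real.eq_of_ofDigits_eq h (pow_mul_ne_natCast_of_notMem_dyadics ha))

theorem exists_le_eq_true_of_bval_notMem_dyadics {a : ℕ → Bool} (ha : bval a ∉ dyadics)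
    (n : ℕ) : ∃ j, n ≤ j ∧ a j = true := by
  rw [bval_eq_ofDigits] at ha
  obtain ⟨j, hj, hne⟩ :=
    Real.exists_le_ne_zero_of_pow_mul_ofDigits_ne (pow_mul_ne_natCast_of_notMem_dyadics ha n)
  exact ⟨j, hj, by simpa using hne⟩

theorem bval_lt_bval {a a' : ℕ → Bool} {i : ℕ} (heq : ∀ j < i, a j = a' j)
    (ha : a i = false) (ha' : a' i = true) (hpos : ∃ j, i < j ∧ a' j = true) :
    bval a < bval a' := by
  rw [bval_eq_ofDigits, bval_eq_ofDigits]
  refine Real.ofDigits_lt_ofDigits (fun j hj ↦ by rw [finDigits, finDigits, heq j hj]) ?_ ?_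
  · simp [finDigits, ha, ha']
  · obtain ⟨j, hij, hj⟩ := hpos
    exact ⟨j, hij, by simp [hj]⟩

noncomputable def binaryDigits (x : ℝ) (i : ℕ) : Bool := ⌊x * 2 ^ (i + 1)⌋ % 2 = 1

theorem finDigits_binaryDigits {x : ℝ} (hx : 0 ≤ x) :
    finDigits (binaryDigits x) = Real.digits x 2 := by
  funext i
  have h := Int.natCast_floor_eq_floor (a := x * 2 ^ (i + 1)) (by positivity)
  apply Fin.ext
  simp only [finDigits, binaryDigits, Real.digits, Fin.val_ofNat, Nat.cast_ofNat, ← h]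
  split_ifs with hk <;> simp at hk ⊢ <;> omega

theorem bval_binaryDigits {x : ℝ} (hx : x ∈ Ico 0 1) : bval (binaryDigits x) = x := by
  rw [bval_eq_ofDigits, finDigits_binaryDigits hx.1, Real.ofDigits_digits one_lt_two hx]

theorem floor_mul_two_pow_of_le (x : ℝ) {j N : ℕ} (h : j ≤ N) :
    ⌊x * 2 ^ j⌋ = ⌊x * 2 ^ N⌋ / 2 ^ (N - j) := by
  obtain ⟨k, rfl⟩ := Nat.exists_eq_add_of_le h
  have : x * 2 ^ j = x * 2 ^ (j + k) / ((2 ^ k : ℕ) : ℝ) := by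
    push_cast
    rw [pow_add]
    field_simp
  rw [this, Int.floor_div_natCast, Nat.add_sub_cancel_left]
  push_cast
  rfl

theorem binaryDigits_eq_of_floor_eq {x y : ℝ} {N i : ℕ} (h : ⌊x * 2 ^ N⌋ = ⌊y * 2 ^ N⌋)
    (hi : i < N) : binaryDigits x i = binaryDigits y i := by
  rw [binaryDigits, binaryDigits, floor_mul_two_pow_of_le x hi, floor_mul_two_pow_of_le y hi, h]

theorem floor_eq_and_binaryDigits_of_floor_eq {x : ℝ} {N : ℕ} {m : ℤ} {j : ℕ} (hj : j < 4)
    (h : ⌊x * 2 ^ (N + 2)⌋ = 4 * m + j) :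
    ⌊x * 2 ^ N⌋ = m ∧ binaryDigits x (N + 1) = decide (j % 2 = 1) := by
  refine ⟨?_, ?_⟩
  · rw [floor_mul_two_pow_of_le x (Nat.le_add_right N 2), h, Nat.add_sub_cancel_left]
    omega
  · rw [binaryDigits, h]
    exact decide_eq_decide.mpr (by omega)

theorem bswap_two_mul (a : ℕ → Bool) (k : ℕ) : bswap a (2 * k) = a (2 * k + 1) := by
  simp [bswap]

theorem bswap_eq_of_forall_lt {a a' : ℕ → Bool} {K : ℕ} (h : ∀ i < 2 * K, a i = a' i) :
    ∀ i < 2 * K, bswap a i = bswap a' i := by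
  intro i hi
  unfold bswap
  split_ifs <;> exact h _ (by omega)

theorem exists_bswap_eq (a : ℕ → Bool) (j : ℕ) :
    ∃ k, k / 2 = j / 2 ∧ bswap a k = a j := by
  rcases Nat.even_or_odd' j with ⟨l, rfl | rfl⟩
  · exact ⟨2 * l + 1, by omega, by simp [bswap]⟩
  · exact ⟨2 * l, by omega, bswap_two_mul a l⟩

theorem bval_bswap_lt_bval_bswap {a a' : ℕ → Bool} {K : ℕ} (heq : ∀ i < 2 * K, a i = a' i)
    (ha : a (2 * K + 1) = false) (ha' : a' (2 * K + 1) = true) (hd : bval a' ∉ dyadics) :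
    bval (bswap a) < bval (bswap a') := by
  refine bval_lt_bval (bswap_eq_of_forall_lt heq) (by rw [bswap_two_mul, ha])
    (by rw [bswap_two_mul, ha']) ?_
  obtain ⟨j, hj, hj'⟩ := exists_le_eq_true_of_bval_notMem_dyadics hd (2 * K + 2)
  obtain ⟨k, hk, hk'⟩ := exists_bswap_eq a' j
  exact ⟨k, by omega, hk'.trans hj'⟩

noncomputable def digitSwap (x : ℝ) : ℝ := bval (bswap (binaryDigits x))

theorem mem_swapGraph {x : ℝ} (hx : x ∈ Ioo 0 1) (hd : x ∉ dyadics) :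
    (x, digitSwap x) ∈ swapGraph := by
  have hval := bval_binaryDigits (Ioo_subset_Ico_self hx)
  refine ⟨binaryDigits x, hval, fun a (ha : bval a = x) ↦ ?_, hx, rfl⟩
  exact eq_of_bval_eq (ha.trans hval.symm) (ha ▸ hd)

theorem eq_digitSwap_of_mem_swapGraph {x y : ℝ} (h : (x, y) ∈ swapGraph) : y = digitSwap x := by
  obtain ⟨a, ha, huniq, hx, rfl⟩ := h
  rw [digitSwap, huniq _ (bval_binaryDigits (Ioo_subset_Ico_self hx))]

theorem digitSwap_lt_digitSwap {x y : ℝ} {N : ℕ} {m : ℤ} {jx jy : ℕ} (hjx : jx < 4)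
    (hjy : jy < 4) (hx : ⌊x * 2 ^ (2 * N + 2)⌋ = 4 * m + jx)
    (hy : ⌊y * 2 ^ (2 * N + 2)⌋ = 4 * m + jy) (hjx' : jx % 2 = 0) (hjy' : jy % 2 = 1)
    (hy01 : y ∈ Ico 0 1) (hyd : y ∉ dyadics) : digitSwap x < digitSwap y := by
  obtain ⟨hxm, hx'⟩ := floor_eq_and_binaryDigits_of_floor_eq hjx hx
  obtain ⟨hym, hy'⟩ := floor_eq_and_binaryDigits_of_floor_eq hjy hy
  exact bval_bswap_lt_bval_bswap
    (fun i hi ↦ binaryDigits_eq_of_floor_eq (hxm.trans hym.symm) hi)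
    (by simp [hx', hjx']) (by simp [hy', hjy']) (by rwa [bval_binaryDigits hy01])

theorem measure_inter_ne_zero_of_lt_div {α : Type*} [MeasurableSpace α] {μ : Measure α}
    {s B I : Set α} {c : ℝ≥0∞} (h : 1 - c < μ (s ∩ B) / μ B) (hIB : I ⊆ B)
    (hI : MeasurableSet I) (hc : c * μ B ≤ μ I) : μ (s ∩ I) ≠ 0 := by
  intro h0
  have hB : μ B ≠ ∞ := by
    rintro hB
    rw [hB, ENNReal.div_top] at h
    exact ENNReal.not_lt_zero h
  refine h.not_ge (ENNReal.div_le_of_le_mul ?_)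
  calc μ (s ∩ B) ≤ μ (s ∩ I ∪ B \ I) := measure_mono fun y ⟨hs, hb⟩ ↦ by
        by_cases hy : y ∈ I
        exacts [Or.inl ⟨hs, hy⟩, Or.inr ⟨hb, hy⟩]
    _ ≤ μ (s ∩ I) + μ (B \ I) := measure_union_le _ _
    _ = μ B - μ I := by
        rw [h0, zero_add, measure_sdiff hIB hI.nullMeasurableSet
          (ne_top_of_le_ne_top hB (measure_mono hIB))]
    _ ≤ μ B - c * μ B := tsub_le_tsub_left hc _
    _ = (1 - c) * μ B := by rw [ENNReal.sub_mul fun _ _ ↦ hB, one_mul]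

theorem floor_mul_eq_of_mem_Ico {y c : ℝ} (hc : 0 < c) {k : ℤ}
    (hy : y ∈ Ico (k / c) ((k + 1) / c)) : ⌊y * c⌋ = k := by
  rw [Int.floor_eq_iff, ← div_le_iff₀ hc, ← lt_div_iff₀ hc]
  exact hy

theorem eventually_exists_quarters_meet {s t : Set ℝ} (hs : volume s ≠ 0) (ht : volume t = 0) :
    ∀ᶠ N in atTop, ∃ m : ℤ, ∀ j : ℕ, j < 4 →
      ∃ y ∈ s \ t, ⌊y * 2 ^ (N + 2)⌋ = 4 * m + j := by
  have := ae_restrict_neBot.2 hs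
  obtain ⟨x, hx⟩ := (Besicovitch.ae_tendsto_measure_inter_div volume s).exists
  -- each quarter below fills an eighth of the ball of radius `2⁻ᴺ` around `x` containing it
  set c : ℝ≥0∞ := ENNReal.ofReal 8⁻¹
  have hev : ∀ᶠ r in 𝓝[>] 0,
      1 - c < volume (s ∩ closedBall x r) / volume (closedBall x r) :=
    hx.eventually (lt_mem_nhds (ENNReal.sub_lt_self ENNReal.one_ne_top one_ne_zero
      (by simp [c])))
  have hr : Tendsto (fun N : ℕ ↦ ((2 : ℝ) ^ N)⁻¹) atTop (𝓝[>] 0) :=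
    tendsto_inv_atTop_nhdsGT_zero.comp (tendsto_pow_atTop_atTop_of_one_lt one_lt_two)
  filter_upwards [hr.eventually hev] with N hN
  refine ⟨⌊x * 2 ^ N⌋, fun j hj ↦ ?_⟩
  set k : ℤ := 4 * ⌊x * 2 ^ N⌋ + j
  have hP : (0 : ℝ) < 2 ^ N := by positivity
  have hQ : (0 : ℝ) < 2 ^ (N + 2) := by positivity
  set I := Ico (k / (2 : ℝ) ^ (N + 2)) ((k + 1) / 2 ^ (N + 2))
  have hIB : I ⊆ closedBall x ((2 : ℝ) ^ N)⁻¹ := by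
    intro y hy
    have hfloor : ⌊y * 2 ^ N⌋ = ⌊x * 2 ^ N⌋ := by
      rw [floor_mul_two_pow_of_le y (Nat.le_add_right N 2), floor_mul_eq_of_mem_Ico hQ hy,
        Nat.add_sub_cancel_left]
      omega
    have h := Int.abs_sub_lt_one_of_floor_eq_floor hfloor
    rw [← sub_mul, abs_mul, abs_of_pos hP] at h
    rw [mem_closedBall, Real.dist_eq, ← one_div, le_div_iff₀ hP]
    exact h.le
  have hvol : c * volume (closedBall x ((2 : ℝ) ^ N)⁻¹) ≤ volume I := by
    rw [Real.volume_closedBall, Real.volume_Ico, ← ENNReal.ofReal_mul (by norm_num)]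
    refine ENNReal.ofReal_le_ofReal (le_of_eq ?_)
    rw [pow_add]
    field_simp
    norm_num
  have hne : volume ((s ∩ I) \ t) ≠ 0 := by
    rw [measure_sdiff_null ht]
    exact measure_inter_ne_zero_of_lt_div hN hIB measurableSet_Ico hvol
  obtain ⟨y, ⟨hys, hyI⟩, hyt⟩ := nonempty_of_measure_ne_zero hne
  exact ⟨y, ⟨hys, hyt⟩, floor_mul_eq_of_mem_Ico hQ hyI⟩

theorem not_monotoneOn_or_antitoneOn_digitSwap {T : Set ℝ} (hT : T ⊆ Ico 0 1 \ dyadics)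
    {N : ℕ} {m : ℤ}
    (hquarter : ∀ j : ℕ, j < 4 → ∃ y ∈ T, ⌊y * 2 ^ (2 * N + 2)⌋ = 4 * m + j) :
    ¬ (MonotoneOn digitSwap T ∨ AntitoneOn digitSwap T) := by
  have hlt {u v : ℝ} {ju jv : ℕ} (hu : ⌊u * 2 ^ (2 * N + 2)⌋ = 4 * m + ju)
      (hv : ⌊v * 2 ^ (2 * N + 2)⌋ = 4 * m + jv) (h : ju < jv) : u < v := by
    by_contra! hvu
    have := Int.floor_le_floor
      (mul_le_mul_of_nonneg_right hvu (by positivity : (0 : ℝ) ≤ 2 ^ (2 * N + 2)))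
    omega
  obtain ⟨y₀, h₀T, h₀⟩ := hquarter 0 (by norm_num)
  obtain ⟨y₁, h₁T, h₁⟩ := hquarter 1 (by norm_num)
  obtain ⟨y₂, h₂T, h₂⟩ := hquarter 2 (by norm_num)
  obtain ⟨y₃, h₃T, h₃⟩ := hquarter 3 (by norm_num)
  rintro (hmono | hanti)
  · exact (hmono h₁T h₂T (hlt h₁ h₂ one_lt_two).le).not_gt <|
      digitSwap_lt_digitSwap (by norm_num) (by norm_num) h₂ h₁ rfl rfl (hT h₁T).1 (hT h₁T).2
  · exact (hanti h₀T h₃T (hlt h₀ h₃ (by norm_num)).le).not_gt <|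
      digitSwap_lt_digitSwap (by norm_num) (by norm_num) h₀ h₃ rfl rfl (hT h₃T).1 (hT h₃T).2

theorem swap_not_countable_union_monotone_general (g : ℕ → ℝ → ℝ) (S : ℕ → Set ℝ)
    (hg : ∀ n, MonotoneOn (g n) (S n) ∨ AntitoneOn (g n) (S n))
    (hcover : ∀ p ∈ swapGraph, ∃ n, p.1 ∈ S n ∧ g n p.1 = p.2) :
    False := by
  set A : ℕ → Set ℝ := fun n ↦ {x | x ∈ S n ∧ (x, g n x) ∈ swapGraph}
  have hcov : Ioo 0 1 \ dyadics ⊆ ⋃ n, A n := by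
    rintro x ⟨hx, hd⟩
    obtain ⟨n, hn, hgx⟩ := hcover _ (mem_swapGraph hx hd)
    refine mem_iUnion.2 ⟨n, hn, ?_⟩
    simpa [hgx] using mem_swapGraph hx hd
  have hnull : volume dyadics = 0 := countable_dyadics.measure_zero _
  obtain ⟨n, hn⟩ : ∃ n, volume (A n) ≠ 0 := by
    by_contra! h
    have := measure_mono_null hcov (measure_iUnion_null h)
    simp [measure_sdiff_null hnull] at this
  obtain ⟨N, hN⟩ := eventually_atTop.1 (eventually_exists_quarters_meet hn hnull)
  obtain ⟨m, hm⟩ := hN (2 * N) (by omega)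
  have hT : A n \ dyadics ⊆ Ico 0 1 \ dyadics := fun x ⟨⟨_, _, _, _, hx, _⟩, hd⟩ ↦
    ⟨Ioo_subset_Ico_self hx, hd⟩
  have heq : EqOn (g n) digitSwap (A n \ dyadics) := fun x hx ↦
    eq_digitSwap_of_mem_swapGraph hx.1.2
  refine not_monotoneOn_or_antitoneOn_digitSwap hT hm ?_
  rcases hg n with h | h
  · exact .inl ((h.mono fun x hx ↦ hx.1.1).congr heq)
  · exact .inr ((h.mono fun x hx ↦ hx.1.1).congr heq)

/-- The digit-swapping function is not contained in a countable union of
monotone functions whose agreement sets with it are Lebesgue measurable. -/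
theorem swap_not_countable_union_monotone (g : ℕ → ℝ → ℝ) (S : ℕ → Set ℝ)
    (hg : ∀ n, MonotoneOn (g n) (S n) ∨ AntitoneOn (g n) (S n))
    (hmeas : ∀ n, MeasurableSet {x : ℝ | x ∈ S n ∧ (x, g n x) ∈ swapGraph})
    (hcover : ∀ p ∈ swapGraph, ∃ n, p.1 ∈ S n ∧ g n p.1 = p.2) :
    False :=
  swap_not_countable_union_monotone_general g S hg hcover
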